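/- Let (G,L) be an uncolorable pair. Then for each block B of G there is a list-assignment L_B of B such that (B,L_B) is an uncolorable pair and, for every vertex v of G, L(v) is the union of the sets L_B(v) over all blocks B of G containing v. -/

import Mathlib

open scoped Classical

/-- A signed graph: a finite loopless multigraph together with a sign `+1` or `-1`
on each edge. -/
structure SignedGraph where
  /-- vertex type -/
  V : Type
  /-- edge type -/
  E : Type
  fintypeV : Fintype V
  fintypeE : Fintype E
  decEqV : DecidableEq V
  /-- the two (distinct) endpoints of an edge, as an unordered pair -/
  ends : E → Sym2 V
  loopless : ∀ e : E, ¬ (ends e).IsDiag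
  /-- the sign of an edge -/
  sign : E → ℤ
  sign_unit : ∀ e : E, sign e = 1 ∨ sign e = -1

attribute [instance] SignedGraph.fintypeV SignedGraph.fintypeE SignedGraph.decEqV

namespace SignedGraph

variable (G : SignedGraph)

/-- The degree of a vertex: the number of edges incident with it. -/
noncomputable def degree (v : G.V) : ℕ :=
  (Finset.univ.filter (fun e : G.E => v ∈ G.ends e)).card

/-- The maximum degree `Δ(G)`. -/
noncomputable def maxDegree : ℕ :=
  Finset.univ.sup (fun v : G.V => G.degree v)

/-- Two vertices are adjacent if some edge joins them. -/
def Adj (v w : G.V) : Prop := ∃ e : G.E, G.ends e = s(v, w)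

/-- The simple graph of the adjacency relation (underlying simplification). -/
def adjGraph : SimpleGraph G.V where
  Adj := G.Adj
  symm := ⟨fun _ _ h => by obtain ⟨e, he⟩ := h; exact ⟨e, he.trans (Sym2.eq_swap)⟩⟩
  loopless := ⟨fun v h => by
    obtain ⟨e, he⟩ := h
    exact G.loopless e (by rw [he]; exact Sym2.mk_isDiag_iff.mpr rfl)⟩

/-- A signed graph is connected if its underlying graph is connected. -/
def Connected : Prop := G.adjGraph.Connected

/-- The underlying graph is simple: no two parallel edges. -/
def SimpleUnderlying : Prop := ∀ e f : G.E, G.ends e = G.ends f → e = f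

/-- A (proper) coloring of a signed graph. -/
def IsColoring (φ : G.V → ℤ) : Prop :=
  ∀ (e : G.E) (v w : G.V), G.ends e = s(v, w) → φ v ≠ G.sign e * φ w

/-- The color set `Z_k`:  `Z_{2h} = {±1, …, ±h}` and `Z_{2h+1} = Z_{2h} ∪ {0}`. -/
def ZSet (k : ℕ) : Set ℤ := {x : ℤ | 2 * |x| ≤ (k : ℤ) ∧ (x = 0 → Odd k)}

/-- The signed chromatic number `χ±(G)`: the least `k` such that `G` admits a
coloring with image contained in `Z_k`. -/
noncomputable def signedChromaticNumber : ℕ :=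
  sInf {k : ℕ | ∃ φ : G.V → ℤ, G.IsColoring φ ∧ ∀ v : G.V, φ v ∈ ZSet k}

/-- `G` admits a coloring from the lists `L`. -/
def ListColorable (L : G.V → Finset ℤ) : Prop :=
  ∃ φ : G.V → ℤ, G.IsColoring φ ∧ ∀ v : G.V, φ v ∈ L v

/-- The signed choice number `χℓ±(G)`. -/
noncomputable def signedChoiceNumber : ℕ :=
  sInf {k : ℕ | ∀ L : G.V → Finset ℤ, (∀ v : G.V, (L v).card = k) → G.ListColorable L}

/-- `G` is degree choosable. -/
def DegreeChoosable : Prop :=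
  ∀ L : G.V → Finset ℤ, (∀ v : G.V, (L v).card = G.degree v) → G.ListColorable L

/-- `(G, L)` is an uncolorable pair. -/
def UncolorablePair (L : G.V → Finset ℤ) : Prop :=
  G.Connected ∧ (∀ v : G.V, G.degree v ≤ (L v).card) ∧ ¬ G.ListColorable L

/-- Walks in a signed multigraph. -/
inductive Walk (G : SignedGraph) : G.V → G.V → Type
  | nil (v : G.V) : Walk G v v
  | cons {v w u : G.V} (e : G.E) (he : G.ends e = s(v, w)) (p : Walk G w u) : Walk G v u

namespace Walk

variable {G}

/-- The list of edges of a walk. -/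
def edges : ∀ {v w : G.V}, Walk G v w → List G.E
  | _, _, .nil _ => []
  | _, _, .cons e _ p => e :: edges p

/-- The list of vertices of a walk. -/
def support : ∀ {v w : G.V}, Walk G v w → List G.V
  | _, _, .nil v => [v]
  | v, _, .cons _ _ p => v :: support p

/-- The length of a walk. -/
def length {v w : G.V} (p : Walk G v w) : ℕ := p.edges.length

/-- The sign product of a walk. -/
def signProd {v w : G.V} (p : Walk G v w) : ℤ := (p.edges.map G.sign).prod

/-- A cycle: a nonempty closed walk with no repeated edges and no repeated
vertices (except the first = last). -/
def IsCycle {v : G.V} (p : Walk G v v) : Prop :=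
  p.edges ≠ [] ∧ p.edges.Nodup ∧ p.support.tail.Nodup

end Walk

/-- A signed graph is balanced if every cycle has positive sign product. -/
def Balanced : Prop := ∀ (v : G.V) (p : Walk G v v), p.IsCycle → p.signProd = 1

/-- A signed graph is antibalanced if every even cycle has positive sign product
and every odd cycle has negative sign product. -/
def Antibalanced : Prop :=
  ∀ (v : G.V) (p : Walk G v v), p.IsCycle → p.signProd = (-1) ^ p.length

/-- `G` is balanced with parts `X`, `Y`: the vertex set is the disjoint union of
`X` and `Y` and an edge is negative iff it joins `X` to `Y`. -/
def BalancedWithParts (X Y : Set G.V) : Prop :=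
  X ∪ Y = Set.univ ∧ Disjoint X Y ∧
  ∀ (e : G.E) (v w : G.V), G.ends e = s(v, w) →
    (G.sign e = -1 ↔ (v ∈ X ∧ w ∈ Y) ∨ (v ∈ Y ∧ w ∈ X))

/-- The underlying graph is a complete (simple) graph. -/
def IsCompleteGraph : Prop :=
  G.SimpleUnderlying ∧ ∀ v w : G.V, v ≠ w → G.Adj v w

/-- `G` is a balanced complete graph. -/
def IsBalancedComplete : Prop := G.IsCompleteGraph ∧ G.Balanced

/-- The underlying graph is a cycle. -/
def IsCycleGraph : Prop :=
  G.Connected ∧ G.SimpleUnderlying ∧ ∀ v : G.V, G.degree v = 2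

/-- `G` is a balanced odd cycle. -/
def IsBalancedOddCycle : Prop :=
  G.IsCycleGraph ∧ G.Balanced ∧ Odd (Fintype.card G.V)

/-- `G` is an unbalanced even cycle. -/
def IsUnbalancedEvenCycle : Prop :=
  G.IsCycleGraph ∧ ¬ G.Balanced ∧ Even (Fintype.card G.V)

/-- Every edge of `G` comes in a pair of parallel edges of opposite sign, and
any two vertices are joined by at most two edges. -/
def Doubled : Prop :=
  ∀ (e : G.E) (v w : G.V), G.ends e = s(v, w) →
    ∃ f : G.E, f ≠ e ∧ G.ends f = s(v, w) ∧ G.sign f = - G.sign e ∧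
      ∀ g : G.E, G.ends g = s(v, w) → g = e ∨ g = f

/-- `G` is a `2Kₙ` for some `n ≥ 2`. -/
def IsDoubleComplete : Prop :=
  2 ≤ Fintype.card G.V ∧ G.Doubled ∧ ∀ v w : G.V, v ≠ w → G.Adj v w

/-- `G` is a `2Cₙ` for some odd `n ≥ 3`. -/
def IsDoubleOddCycle : Prop :=
  G.Connected ∧ G.Doubled ∧ (∀ v : G.V, G.degree v = 4) ∧ Odd (Fintype.card G.V)

/-- A brick. -/
def IsBrick : Prop :=
  G.IsBalancedComplete ∨ G.IsBalancedOddCycle ∨ G.IsUnbalancedEvenCycle ∨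
    G.IsDoubleComplete ∨ G.IsDoubleOddCycle

/-- A subgraph of a signed graph. -/
structure Subgraph (G : SignedGraph) where
  verts : Set G.V
  edges : Set G.E
  ends_mem : ∀ e ∈ edges, ∀ v ∈ G.ends e, v ∈ verts

namespace Subgraph

variable {G}

/-- A subgraph, regarded as a signed graph in its own right. -/
noncomputable def toSG (H : G.Subgraph) : SignedGraph where
  V := H.verts
  E := H.edges
  fintypeV := Fintype.ofFinite _
  fintypeE := Fintype.ofFinite _
  decEqV := inferInstance
  ends := fun e =>
    s((⟨(G.ends e.1).out.1, H.ends_mem e.1 e.2 _ (Sym2.out_fst_mem _)⟩ : H.verts),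
      (⟨(G.ends e.1).out.2, H.ends_mem e.1 e.2 _ (Sym2.out_snd_mem _)⟩ : H.verts))
  loopless := fun e h => by
    rw [Sym2.mk_isDiag_iff, Subtype.mk.injEq] at h
    exact G.loopless e.1 (by
      rw [← (G.ends e.1).out_eq]
      exact Sym2.mk_isDiag_iff.mpr h)
  sign := fun e => G.sign e.1
  sign_unit := fun e => G.sign_unit e.1

/-- Delete a vertex (and all incident edges) from a subgraph. -/
def delete (H : G.Subgraph) (v : G.V) : G.Subgraph where
  verts := H.verts \ {v}
  edges := {e ∈ H.edges | v ∉ G.ends e}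
  ends_mem := fun e he w hw =>
    ⟨H.ends_mem e he.1 w hw, fun h => he.2 (by rwa [Set.mem_singleton_iff.mp h] at hw)⟩

/-- Subgraph inclusion. -/
def Le (H K : G.Subgraph) : Prop := H.verts ⊆ K.verts ∧ H.edges ⊆ K.edges

/-- `v` is a separating (cut) vertex of the subgraph `H`. -/
def IsCutVertex (H : G.Subgraph) (v : G.V) : Prop :=
  v ∈ H.verts ∧ (H.delete v).verts.Nonempty ∧ ¬ (H.delete v).toSG.Connected

/-- `B` is a block of `G`: a maximal connected subgraph without a cut vertex. -/
def IsBlock (B : G.Subgraph) : Prop :=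
  B.toSG.Connected ∧ (∀ v : G.V, ¬ B.IsCutVertex v) ∧
  ∀ B' : G.Subgraph, B.Le B' → B'.toSG.Connected →
    (∀ v : G.V, ¬ B'.IsCutVertex v) → B'.Le B

/-- The degree of a vertex in a subgraph. -/
noncomputable def degree (H : G.Subgraph) (v : G.V) : ℕ :=
  (Finset.univ.filter (fun e : G.E => e ∈ H.edges ∧ v ∈ G.ends e)).card

/-- The minimum degree of a subgraph. -/
noncomputable def minDegree (H : G.Subgraph) : ℕ :=
  sInf {d : ℕ | ∃ v ∈ H.verts, H.degree v = d}

/-- The subgraph admits a coloring from the lists `L`. -/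
def ListColorable (H : G.Subgraph) (L : G.V → Finset ℤ) : Prop :=
  ∃ φ : G.V → ℤ,
    (∀ e ∈ H.edges, ∀ v w : G.V, G.ends e = s(v, w) → φ v ≠ G.sign e * φ w) ∧
    ∀ v ∈ H.verts, φ v ∈ L v

/-- A proper subgraph. -/
def IsProper (H : G.Subgraph) : Prop :=
  H.verts ≠ Set.univ ∨ H.edges ≠ Set.univ

end Subgraph

/-- The subgraph consisting of all of `G`. -/
def topSubgraph : G.Subgraph := ⟨Set.univ, Set.univ, fun _ _ _ _ => trivial⟩

/-- A separating (cut) vertex of `G`. -/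
def IsCutVertex (v : G.V) : Prop := G.topSubgraph.IsCutVertex v

/-- The coloring number `col(G)`: one plus the maximum over all (nonempty)
subgraphs of the minimum degree. -/
noncomputable def coloringNumber : ℕ :=
  1 + sSup {d : ℕ | ∃ H : G.Subgraph, H.verts.Nonempty ∧ H.minDegree = d}

/-- The subgraph induced by a vertex set `X`. -/
def induced (X : Set G.V) : G.Subgraph where
  verts := X
  edges := {e : G.E | ∀ v ∈ G.ends e, v ∈ X}
  ends_mem := fun e he v hv => he v hv

/-- `G` is `L`-critical. -/
def LCritical (L : G.V → Finset ℤ) : Prop :=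
  ¬ G.ListColorable L ∧ ∀ H : G.Subgraph, H.IsProper → H.ListColorable L

/-- `G` is `k`-critical (with respect to the signed chromatic number). -/
def KCritical (k : ℕ) : Prop :=
  G.signedChromaticNumber = k ∧
  ∀ H : G.Subgraph, H.IsProper → H.toSG.signedChromaticNumber ≤ k - 1

/-- `G` is `k`-list-critical. -/
def KListCritical (k : ℕ) : Prop :=
  ∃ L : G.V → Finset ℤ, (∀ v : G.V, (L v).card = k - 1) ∧ G.LCritical L

/-- The signed graph `2H` obtained from a simple graph `H` by replacing every
edge by a pair of parallel edges, one positive and one negative. -/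
noncomputable def double {W : Type} [Fintype W] [DecidableEq W] (H : SimpleGraph W) :
    SignedGraph where
  V := W
  E := H.edgeSet × Bool
  fintypeV := inferInstance
  fintypeE := Fintype.ofFinite _
  decEqV := inferInstance
  ends := fun e => e.1.1
  loopless := fun e => H.not_isDiag_of_mem_edgeSet e.1.2
  sign := fun e => if e.2 then 1 else -1
  sign_unit := fun e => by by_cases h : e.2 <;> simp [h]

end SignedGraph

/-!
For a block `B` and a vertex `v` of `B`, the branch of `G` at `v` consists of the vertices that
can be reached from `v` without meeting `B` again, and `L_B(v)` is the set of colors of `L(v)`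
that extend to an `L`-coloring of that branch. A greedy argument shows that at most
`deg_branch(v)` colors of `L(v)` fail to extend; since `deg_G(v) = deg_B(v) + deg_branch(v)`, this
leaves at least `deg_B(v)` colors in `L_B(v)`. An `L_B`-coloring of `B` would extend into all
branches at once, which are disjoint because blocks have no ears, and so would color `G`.

Conversely, a color `c ∈ L(v)` fails to extend to some component `C` of `G - v` (with `v` put
back), or the extensions would glue. Take a block `B` through an edge from `v` into `C`; its
branch at `v` misses `C`. Now `G` is glued at `v` from the branch and the rest, and the degrees of
`v` on the two sides add up to at most `deg_G(v) ≤ |L(v)|`, so each color of `L(v)` extends to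
exactly one side. The color `c` does not extend to the rest, which contains `C`; hence
`c ∈ L_B(v)`.
-/

namespace SimpleGraph.Walk

variable {V : Type*} {G : SimpleGraph V} {a b : V}

lemma exists_walk_to_first_mem (p : G.Walk a b) {T : Set V} (hb : b ∈ T) :
    ∃ y ∈ T, ∃ q : G.Walk a y, ∀ x ∈ q.support, x ∈ T → x = y := by
  induction p with
  | nil => exact ⟨_, hb, nil, by simp⟩
  | @cons a c _ h p ih =>
    by_cases ha : a ∈ T
    · exact ⟨a, ha, nil, by simp⟩
    obtain ⟨y, hy, q, hfirst⟩ := ih hb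
    refine ⟨y, hy, cons h q, fun x hx hxT => ?_⟩
    rw [support_cons, List.mem_cons] at hx
    exact hx.elim (fun hxa => absurd (hxa ▸ hxT) ha) (hfirst x · hxT)

lemma IsPath.exists_mem_support_ne {p : G.Walk a b} (hp : p.IsPath) (hab : a ≠ b)
    (hedge : s(a, b) ∉ p.edges) : ∃ z ∈ p.support, z ≠ a ∧ z ≠ b := by
  cases p with
  | nil => exact absurd rfl hab
  | @cons _ z _ h q =>
    rw [cons_isPath_iff] at hp
    refine ⟨z, by simp, fun hza => hp.2 (hza ▸ q.start_mem_support), ?_⟩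
    rintro rfl
    exact hedge (by simp)

variable [DecidableEq V]

lemma IsPath.notMem_takeUntil_or_dropUntil {p : G.Walk a b} (hp : p.IsPath) {x z : V}
    (hx : x ∈ p.support) (hzx : z ≠ x) :
    z ∉ (p.takeUntil x hx).support ∨ z ∉ (p.dropUntil x hx).support := by
  by_contra! h
  have hnodup := hp.support_nodup
  rw [← p.take_spec hx, support_append] at hnodup
  have hz : z ∈ (p.dropUntil x hx).support.tail := by
    have := h.2
    rw [← cons_tail_support, List.mem_cons] at this
    exact this.resolve_left hzx
  exact List.disjoint_of_nodup_append hnodup h.1 hz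

end SimpleGraph.Walk

namespace SignedGraph

variable {G : SignedGraph}

theorem Subgraph.ext {H K : G.Subgraph} (hv : H.verts = K.verts) (he : H.edges = K.edges) :
    H = K := by
  cases H; cases K; simp_all

instance : Finite G.Subgraph :=
  Finite.of_injective (fun H : G.Subgraph => (H.verts, H.edges))
    fun _ _ h => Subgraph.ext (congrArg Prod.fst h) (congrArg Prod.snd h)

lemma ne_of_ends_eq {e : G.E} {x y : G.V} (h : G.ends e = s(x, y)) : x ≠ y := by
  rintro rfl
  exact G.loopless e (h ▸ Sym2.mk_isDiag_iff.mpr rfl)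

lemma exists_ends_eq (e : G.E) : ∃ x y, G.ends e = s(x, y) :=
  ⟨_, _, (G.ends e).out_eq.symm⟩

lemma exists_ends_eq_of_mem {e : G.E} {v : G.V} (hv : v ∈ G.ends e) :
    ∃ w, w ≠ v ∧ G.ends e = s(v, w) := by
  obtain ⟨w, hw⟩ := Sym2.mem_iff_exists.mp hv
  exact ⟨w, (ne_of_ends_eq hw).symm, hw⟩

lemma eq_or_eq_of_mem_ends {e : G.E} {x y z : G.V} (h : G.ends e = s(x, y))
    (hz : z ∈ G.ends e) : z = x ∨ z = y :=
  Sym2.mem_iff.mp (h ▸ hz)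

lemma mem_ends_left {e : G.E} {x y : G.V} (h : G.ends e = s(x, y)) : x ∈ G.ends e :=
  h ▸ Sym2.mem_mk_left x y

lemma mem_ends_right {e : G.E} {x y : G.V} (h : G.ends e = s(x, y)) : y ∈ G.ends e :=
  h ▸ Sym2.mem_mk_right x y

namespace Subgraph

def adjGraph (H : G.Subgraph) : SimpleGraph G.V where
  Adj x y := ∃ e ∈ H.edges, G.ends e = s(x, y)
  symm := ⟨fun _ _ ⟨e, he, h⟩ => ⟨e, he, h.trans Sym2.eq_swap⟩⟩
  loopless := ⟨fun _ ⟨_, _, h⟩ => ne_of_ends_eq h rfl⟩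

lemma adjGraph_mono {H K : G.Subgraph} (h : H.edges ⊆ K.edges) : H.adjGraph ≤ K.adjGraph :=
  fun _ _ ⟨e, he, hends⟩ => ⟨e, h he, hends⟩

lemma adjGraph_le (H : G.Subgraph) : H.adjGraph ≤ G.adjGraph :=
  fun _ _ ⟨e, _, hends⟩ => ⟨e, hends⟩

lemma mem_verts_of_adj {H : G.Subgraph} {x y : G.V} (h : H.adjGraph.Adj x y) :
    x ∈ H.verts ∧ y ∈ H.verts :=
  let ⟨e, he, hends⟩ := h
  ⟨H.ends_mem e he x (mem_ends_left hends), H.ends_mem e he y (mem_ends_right hends)⟩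

lemma support_subset_verts {H : G.Subgraph} {a b : G.V} (p : H.adjGraph.Walk a b)
    (ha : a ∈ H.verts) : ∀ t ∈ p.support, t ∈ H.verts := by
  induction p with
  | nil => simpa using ha
  | cons h _ ih =>
    simpa [ha] using ih (mem_verts_of_adj h).2

lemma reachable_delete_of_notMem_support {H : G.Subgraph} {a b z : G.V}
    (p : H.adjGraph.Walk a b) (hz : z ∉ p.support) : (H.delete z).adjGraph.Reachable a b := by
  induction p with
  | nil => rfl
  | @cons x y _ h q ih =>
    rw [SimpleGraph.Walk.support_cons, List.mem_cons, not_or] at hz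
    obtain ⟨e, he, hends⟩ := h
    have hze : z ∉ G.ends e := fun hze =>
      (eq_or_eq_of_mem_ends hends hze).elim hz.1 fun h => hz.2 (h ▸ q.start_mem_support)
    have hadj : (H.delete z).adjGraph.Adj x y := ⟨e, ⟨he, hze⟩, hends⟩
    exact hadj.reachable.trans (ih hz.2)

lemma toSG_ends_map (H : G.Subgraph) (e : H.toSG.E) :
    (H.toSG.ends e).map Subtype.val = G.ends e.1 :=
  (G.ends e.1).out_eq

lemma toSG_ends_eq_iff {H : G.Subgraph} (e : H.toSG.E) (a b : H.toSG.V) :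
    H.toSG.ends e = s(a, b) ↔ G.ends e.1 = s(a.1, b.1) := by
  rw [← toSG_ends_map]
  exact (Sym2.map.injective Subtype.val_injective).eq_iff.symm

lemma mem_toSG_ends_iff {H : G.Subgraph} (e : H.toSG.E) (a : H.toSG.V) :
    a ∈ H.toSG.ends e ↔ a.1 ∈ G.ends e.1 := by
  obtain ⟨p, q, hpq⟩ : ∃ p q, H.toSG.ends e = s(p, q) := ⟨_, _, rfl⟩
  rw [hpq, (toSG_ends_eq_iff e p q).mp hpq]
  simp only [Sym2.mem_iff]
  exact or_congr Subtype.ext_iff Subtype.ext_iff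

lemma toSG_degree (H : G.Subgraph) (u : H.toSG.V) : H.toSG.degree u = H.degree u.1 := by
  unfold SignedGraph.degree Subgraph.degree
  refine Finset.card_bij (fun e _ => e.1) ?_ (fun _ _ _ _ => Subtype.ext) ?_
  · intro e he
    simp only [Finset.mem_filter, Finset.mem_univ, true_and] at he ⊢
    exact ⟨e.2, (mem_toSG_ends_iff e u).mp he⟩
  · intro e he
    simp only [Finset.mem_filter, Finset.mem_univ, true_and] at he
    exact ⟨⟨e, he.1⟩, Finset.mem_filter.mpr
      ⟨Finset.mem_univ _, (mem_toSG_ends_iff ⟨e, he.1⟩ u).mpr he.2⟩, rfl⟩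

lemma toSG_adjGraph (H : G.Subgraph) : H.toSG.adjGraph = H.adjGraph.induce H.verts := by
  ext a b
  exact ⟨fun ⟨e, he⟩ => ⟨e.1, e.2, (toSG_ends_eq_iff e a b).mp he⟩,
    fun ⟨e, he, hends⟩ => ⟨⟨e, he⟩, (toSG_ends_eq_iff ⟨e, he⟩ a b).mpr hends⟩⟩

lemma toSG_connected_iff (H : G.Subgraph) :
    H.toSG.Connected ↔
      H.verts.Nonempty ∧ ∀ x ∈ H.verts, ∀ y ∈ H.verts, H.adjGraph.Reachable x y := by
  have h : H.toSG.Connected ↔ (H.adjGraph.induce H.verts).Connected := by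
    unfold SignedGraph.Connected; rw [toSG_adjGraph]; exact Iff.rfl
  rw [h, SimpleGraph.connected_iff]
  constructor
  · rintro ⟨hpre, ⟨a⟩⟩
    exact ⟨⟨a.1, a.2⟩, fun x hx y hy =>
      (hpre ⟨x, hx⟩ ⟨y, hy⟩).map (SimpleGraph.Embedding.induce H.verts).toHom⟩
  · rintro ⟨⟨a, ha⟩, h⟩
    refine ⟨fun x y => ?_, ⟨⟨a, ha⟩⟩⟩
    obtain ⟨p⟩ := h x.1 x.2 y.1 y.2
    exact ⟨p.induce H.verts (support_subset_verts p x.2)⟩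

lemma toSG_connected_of_reachable {H : G.Subgraph} {c : G.V} (hc : c ∈ H.verts)
    (h : ∀ x ∈ H.verts, H.adjGraph.Reachable c x) : H.toSG.Connected :=
  (toSG_connected_iff H).mpr ⟨⟨c, hc⟩, fun x hx y hy => (h x hx).symm.trans (h y hy)⟩

lemma reachable_of_toSG_connected {H : G.Subgraph} (hH : H.toSG.Connected) {x y : G.V}
    (hx : x ∈ H.verts) (hy : y ∈ H.verts) : H.adjGraph.Reachable x y :=
  ((toSG_connected_iff H).mp hH).2 x hx y hy

end Subgraph

lemma sign_mul_self (e : G.E) : G.sign e * G.sign e = 1 := by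
  rcases G.sign_unit e with h | h <;> simp [h]

lemma mem_of_mem_update {L : G.V → Finset ℤ} {v x : G.V} {a c : ℤ} (hc : c ∈ L v)
    (h : a ∈ Function.update L v {c} x) : a ∈ L x := by
  by_cases hx : x = v
  · subst hx
    rw [Function.update_self, Finset.mem_singleton] at h
    exact h ▸ hc
  · rwa [Function.update_of_ne hx] at h

/-- `piece x` selects the subgraph whose coloring is used at `x`. -/
theorem listColorable_of_cover {ι : Type*} {L : G.V → Finset ℤ} (H : ι → G.Subgraph)
    (φ : ι → G.V → ℤ) (piece : G.V → ι)
    (hcol : ∀ i, ∀ e ∈ (H i).edges, ∀ x y, G.ends e = s(x, y) → φ i x ≠ G.sign e * φ i y)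
    (hagree : ∀ i, ∀ x ∈ (H i).verts, φ i x = φ (piece x) x)
    (hedges : ∀ e, ∃ i, e ∈ (H i).edges) (hL : ∀ x, φ (piece x) x ∈ L x) :
    G.ListColorable L := by
  refine ⟨fun x => φ (piece x) x, fun e x y hxy => ?_, hL⟩
  obtain ⟨i, hi⟩ := hedges e
  show φ (piece x) x ≠ G.sign e * φ (piece y) y
  rw [← hagree i x ((H i).ends_mem e hi x (mem_ends_left hxy)),
    ← hagree i y ((H i).ends_mem e hi y (mem_ends_right hxy))]
  exact hcol i e hi x y hxy

lemma induced_le_induced {S T : Set G.V} (h : S ⊆ T) : (G.induced S).Le (G.induced T) :=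
  ⟨h, fun _ he z hz => h (he z hz)⟩

namespace Subgraph

lemma degree_le (H : G.Subgraph) (v : G.V) : H.degree v ≤ G.degree v :=
  Finset.card_le_card fun e he => by simp_all

lemma ListColorable.mono {H K : G.Subgraph} (hle : H.Le K) {L : G.V → Finset ℤ}
    (h : K.ListColorable L) : H.ListColorable L :=
  let ⟨φ, hφ, hL⟩ := h
  ⟨φ, fun e he => hφ e (hle.2 he), fun v hv => hL v (hle.1 hv)⟩

lemma listColorable_of_toSG {H : G.Subgraph} {L : G.V → Finset ℤ}
    (h : H.toSG.ListColorable fun u => L u.1) : H.ListColorable L := by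
  obtain ⟨φ, hφ, hφL⟩ := h
  refine ⟨fun x => if hx : x ∈ H.verts then φ ⟨x, hx⟩ else 0, fun e he x y hxy => ?_,
    fun x hx => by simpa [hx] using hφL ⟨x, hx⟩⟩
  have hx := H.ends_mem e he x (mem_ends_left hxy)
  have hy := H.ends_mem e he y (mem_ends_right hxy)
  simp only [dif_pos hx, dif_pos hy]
  exact hφ ⟨e, he⟩ ⟨x, hx⟩ ⟨y, hy⟩ ((toSG_ends_eq_iff _ _ _).mpr hxy)

noncomputable def edgesJoining (H : G.Subgraph) (z w : G.V) : Finset G.E :=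
  Finset.univ.filter fun e => e ∈ H.edges ∧ z ∈ G.ends e ∧ w ∈ G.ends e

lemma degree_eq_degree_delete_add (H : G.Subgraph) (z w : G.V) :
    H.degree z = (H.delete w).degree z + (H.edgesJoining z w).card := by
  simp only [Subgraph.degree]
  rw [← Finset.card_filter_add_card_filter_not (fun e => w ∉ G.ends e),
    Finset.filter_filter, Finset.filter_filter]
  congr 2 <;> ext e <;>
    simp only [Subgraph.delete, edgesJoining, Finset.mem_filter, Finset.mem_univ, true_and,
      Set.mem_sep_iff] <;>
    tauto

lemma one_le_degree {H : G.Subgraph} (hH : H.toSG.Connected) {u w : G.V} (hu : u ∈ H.verts)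
    (hw : w ∈ H.verts) (hwu : w ≠ u) : 1 ≤ H.degree w := by
  obtain ⟨p⟩ := reachable_of_toSG_connected hH hw hu
  cases p with
  | nil => exact absurd rfl hwu
  | cons h _ =>
    obtain ⟨e, he, hends⟩ := h
    exact Finset.card_pos.mpr ⟨e, by simp [he, mem_ends_left hends]⟩

/-- A vertex farthest from `u` can be deleted without disconnecting `H`. -/
lemma exists_delete_connected {H : G.Subgraph} (hH : H.toSG.Connected) {u w₀ : G.V}
    (hu : u ∈ H.verts) (hw₀ : w₀ ∈ H.verts) (hw₀u : w₀ ≠ u) :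
    ∃ w ∈ H.verts, w ≠ u ∧ (H.delete w).toSG.Connected := by
  obtain ⟨w, hw, hmax⟩ := Finset.exists_max_image (H.verts.toFinset.erase u)
    (H.adjGraph.dist u) ⟨w₀, by simp [hw₀, hw₀u]⟩
  rw [Finset.mem_erase, Set.mem_toFinset] at hw
  refine ⟨w, hw.2, hw.1, toSG_connected_of_reachable (c := u) ⟨hu, hw.1.symm⟩ ?_⟩
  rintro x ⟨hx, hxw⟩
  rw [Set.mem_singleton_iff] at hxw
  obtain ⟨p, hp⟩ := (reachable_of_toSG_connected hH hu hx).exists_walk_length_eq_dist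
  refine reachable_delete_of_notMem_support p fun hwp => ?_
  have htake := SimpleGraph.dist_le (p.takeUntil w hwp)
  have hlen := congrArg SimpleGraph.Walk.length (p.take_spec hwp)
  have hdrop : (p.dropUntil w hwp).length ≠ 0 := fun h0 =>
    hxw (SimpleGraph.Walk.eq_of_length_eq_zero h0).symm
  have hxmax : H.adjGraph.dist u x ≤ H.adjGraph.dist u w := by
    by_cases hxu : x = u
    · simp [hxu]
    · exact hmax x (by simp [hx, hxu])
  rw [SimpleGraph.Walk.length_append] at hlen
  omega

lemma listColorable_of_delete {H : G.Subgraph} {L : G.V → Finset ℤ} {w : G.V} {c : ℤ}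
    (hc : c ∈ L w)
    (h : (H.delete w).ListColorable fun z => L z \ (H.edgesJoining z w).image (G.sign · * c)) :
    H.ListColorable L := by
  obtain ⟨φ, hφ, hφL⟩ := h
  have forbidden : ∀ e ∈ H.edges, ∀ x y, G.ends e = s(x, y) →
      G.sign e * c ∈ (H.edgesJoining x y).image (G.sign · * c) := fun e he x y hxy =>
    Finset.mem_image_of_mem _ (by simp [edgesJoining, he, mem_ends_left hxy, mem_ends_right hxy])
  refine ⟨Function.update φ w c, fun e he x y hxy => ?_, fun z hz => ?_⟩
  · have hxy' := ne_of_ends_eq hxy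
    by_cases hwe : w ∈ G.ends e
    · rcases eq_or_eq_of_mem_ends hxy hwe with rfl | rfl
      · have hy : y ∈ (H.delete w).verts := ⟨H.ends_mem e he y (mem_ends_right hxy), hxy'.symm⟩
        rw [Function.update_self, Function.update_of_ne hxy'.symm]
        intro hcy
        have hφy : φ y = G.sign e * c := by rw [hcy, ← mul_assoc, sign_mul_self, one_mul]
        refine (Finset.mem_sdiff.mp (hφL y hy)).2 ?_
        rw [hφy]
        exact forbidden e he y w (hxy.trans Sym2.eq_swap)
      · have hx : x ∈ (H.delete w).verts := ⟨H.ends_mem e he x (mem_ends_left hxy), hxy'⟩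
        rw [Function.update_of_ne hxy', Function.update_self]
        intro hxc
        exact (Finset.mem_sdiff.mp (hφL x hx)).2 (hxc ▸ forbidden e he x w hxy)
    · have hx : x ≠ w := fun h => hwe (h ▸ mem_ends_left hxy)
      have hy : y ≠ w := fun h => hwe (h ▸ mem_ends_right hxy)
      rw [Function.update_of_ne hx, Function.update_of_ne hy]
      exact hφ e ⟨he, hwe⟩ x y hxy
  · by_cases hzw : z = w
    · subst hzw
      rwa [Function.update_self]
    · rw [Function.update_of_ne hzw]
      exact Finset.sdiff_subset (hφL z ⟨hz, hzw⟩)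

/-- Greedy coloring: color the vertices in order of decreasing distance from `u`, so that every
vertex but `u` still has an uncolored neighbor when its turn comes. -/
theorem listColorable_of_degree_le {H : G.Subgraph} (hH : H.toSG.Connected) {u : G.V}
    (hu : u ∈ H.verts) {L : G.V → Finset ℤ}
    (hdeg : ∀ w ∈ H.verts, w ≠ u → H.degree w ≤ (L w).card) (hlt : H.degree u < (L u).card) :
    H.ListColorable L := by
  induction hn : H.verts.ncard using Nat.strong_induction_on generalizing H L with
  | _ n ih =>
  by_cases hne : ∃ w₀ ∈ H.verts, w₀ ≠ u
  · obtain ⟨w₀, hw₀, hw₀u⟩ := hne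
    obtain ⟨w, hw, hwu, hconn⟩ := exists_delete_connected hH hu hw₀ hw₀u
    obtain ⟨c, hc⟩ := Finset.card_pos.mp ((one_le_degree hH hu hw hwu).trans (hdeg w hw hwu))
    have hcard : ∀ z, (L z).card - (H.edgesJoining z w).card ≤
        (L z \ (H.edgesJoining z w).image (G.sign · * c)).card := fun z =>
      (Nat.sub_le_sub_left Finset.card_image_le _).trans (Finset.le_card_sdiff _ _)
    refine listColorable_of_delete hc (ih _ ?_ hconn ⟨hu, hwu.symm⟩ (fun z hz hzu => ?_) ?_ rfl)
    · rw [← hn]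
      exact Set.ncard_sdiff_singleton_lt_of_mem hw
    · have := H.degree_eq_degree_delete_add z w
      have := hdeg z hz.1 hzu
      have := hcard z
      omega
    · have := H.degree_eq_degree_delete_add u w
      have := hcard u
      omega
  · push Not at hne
    obtain ⟨c, hc⟩ := Finset.card_pos.mp (Nat.zero_lt_of_lt hlt)
    refine ⟨fun _ => c, fun e he x y hxy => ?_, fun z hz => hne z hz ▸ hc⟩
    have hx := hne x (H.ends_mem e he x (mem_ends_left hxy))
    have hy := hne y (H.ends_mem e he y (mem_ends_right hxy))
    exact absurd (hx.trans hy.symm) (ne_of_ends_eq hxy)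

noncomputable def extendableColors (H : G.Subgraph) (L : G.V → Finset ℤ) (u : G.V) :
    Finset ℤ :=
  (L u).filter fun c => H.ListColorable (Function.update L u {c})

lemma extendableColors_subset (H : G.Subgraph) (L : G.V → Finset ℤ) (u : G.V) :
    H.extendableColors L u ⊆ L u :=
  Finset.filter_subset _ _

/-- Coloring `u` from the colors that do not extend is a list-coloring problem with slack at
`u`, so it is solvable unless there are at most `H.degree u` such colors. -/
theorem card_le_card_extendableColors_add {H : G.Subgraph} (hH : H.toSG.Connected) {u : G.V}
    (hu : u ∈ H.verts) {L : G.V → Finset ℤ}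
    (hdeg : ∀ w ∈ H.verts, w ≠ u → H.degree w ≤ (L w).card) :
    (L u).card ≤ (H.extendableColors L u).card + H.degree u := by
  by_contra! hlt
  unfold extendableColors at hlt
  have hsplit := Finset.card_filter_add_card_filter_not (s := L u)
    (fun c => H.ListColorable (Function.update L u {c}))
  obtain ⟨φ, hφ, hφL⟩ := listColorable_of_degree_le hH hu
    (L := Function.update L u ((L u).filter fun c => ¬ H.ListColorable (Function.update L u {c})))
    (fun w hw hwu => by rw [Function.update_of_ne hwu]; exact hdeg w hw hwu)
    (by rw [Function.update_self]; omega)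
  have hφu : φ u ∈ (L u).filter fun c => ¬ H.ListColorable (Function.update L u {c}) := by
    simpa using hφL u hu
  refine (Finset.mem_filter.mp hφu).2 ⟨φ, hφ, fun w hw => ?_⟩
  by_cases hwu : w = u
  · subst hwu
    simp
  · simpa [Function.update_of_ne hwu] using hφL w hw

lemma toSG_connected_of_edges_subset {H K : G.Subgraph} (hv : H.verts = K.verts)
    (he : H.edges ⊆ K.edges) (hH : H.toSG.Connected) : K.toSG.Connected := by
  rw [toSG_connected_iff, ← hv] at *
  exact ⟨hH.1, fun x hx y hy => (hH.2 x hx y hy).mono (adjGraph_mono he)⟩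

lemma toSG_connected_delete {H : G.Subgraph} {z : G.V} (hnc : ¬ H.IsCutVertex z)
    (hz : z ∈ H.verts) (hne : (H.delete z).verts.Nonempty) : (H.delete z).toSG.Connected := by
  by_contra h
  exact hnc ⟨hz, hne, h⟩

lemma reachable_delete {H : G.Subgraph} (hH : H.toSG.Connected) (hnc : ∀ v, ¬ H.IsCutVertex v)
    {x y z : G.V} (hx : x ∈ H.verts) (hxz : x ≠ z) (hy : y ∈ H.verts) (hyz : y ≠ z) :
    (H.delete z).adjGraph.Reachable x y := by
  by_cases hz : z ∈ H.verts
  · exact reachable_of_toSG_connected (toSG_connected_delete (hnc z) hz ⟨x, hx, hxz⟩)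
      ⟨hx, hxz⟩ ⟨hy, hyz⟩
  · refine (reachable_of_toSG_connected hH hx hy).mono (adjGraph_mono fun e he => ⟨he, ?_⟩)
    exact fun hze => hz (H.ends_mem e he z hze)

end Subgraph

lemma exists_isBlock_le (H₀ : G.Subgraph) (hc : H₀.toSG.Connected)
    (hnc : ∀ v, ¬ H₀.IsCutVertex v) : ∃ B : G.Subgraph, B.IsBlock ∧ H₀.Le B := by
  set F : Set G.Subgraph := {H | H₀.Le H ∧ H.toSG.Connected ∧ ∀ v, ¬ H.IsCutVertex v}
  obtain ⟨B, hBF, hmax⟩ := Set.Finite.exists_maximalFor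
    (fun H : G.Subgraph => H.verts.ncard + H.edges.ncard) F (Set.toFinite F)
    ⟨H₀, ⟨subset_rfl, subset_rfl⟩, hc, hnc⟩
  refine ⟨B, ⟨hBF.2.1, hBF.2.2, fun B' hle hconn hncut => ?_⟩, hBF.1⟩
  have h1 := Set.ncard_le_ncard hle.1 (Set.toFinite _)
  have h2 := Set.ncard_le_ncard hle.2 (Set.toFinite _)
  have h := hmax ⟨⟨hBF.1.1.trans hle.1, hBF.1.2.trans hle.2⟩, hconn, hncut⟩ (by simp only; omega)
  simp only at h
  exact ⟨(Set.eq_of_subset_of_ncard_le hle.1 (by omega)).symm.subset,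
    (Set.eq_of_subset_of_ncard_le hle.2 (by omega)).symm.subset⟩

lemma exists_isBlock_mem_edges (e : G.E) : ∃ B : G.Subgraph, B.IsBlock ∧ e ∈ B.edges := by
  obtain ⟨x, y, hxy⟩ := exists_ends_eq e
  let H₀ : G.Subgraph := ⟨{x, y}, {e}, fun f hf z hz => by
    rw [Set.mem_singleton_iff.mp hf] at hz
    exact eq_or_eq_of_mem_ends hxy hz⟩
  have hconn : H₀.toSG.Connected := by
    refine Subgraph.toSG_connected_of_reachable (c := x) (Set.mem_insert x _) ?_
    rintro z (rfl | rfl)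
    · rfl
    · exact SimpleGraph.Adj.reachable ⟨e, rfl, hxy⟩
  have hnc : ∀ v, ¬ H₀.IsCutVertex v := by
    rintro z ⟨hz, ⟨w, hw⟩, hdisc⟩
    refine hdisc (Subgraph.toSG_connected_of_reachable hw fun w' hw' => ?_)
    obtain ⟨hw, hwz⟩ := hw
    obtain ⟨hw', hw'z⟩ := hw'
    have : w = w' := by
      simp only [H₀, Set.mem_insert_iff, Set.mem_singleton_iff] at hz hw hw' hwz hw'z
      rcases hz with rfl | rfl <;> rcases hw with rfl | rfl <;> rcases hw' with rfl | rfl <;>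
        simp_all
    rw [this]
  obtain ⟨B, hB, hle⟩ := exists_isBlock_le H₀ hconn hnc
  exact ⟨B, hB, hle.2 rfl⟩

namespace Subgraph

def addWalk (H : G.Subgraph) {a b : G.V} (P : G.adjGraph.Walk a b) : G.Subgraph where
  verts := H.verts ∪ {x | x ∈ P.support}
  edges := H.edges ∪ {e | G.ends e ∈ P.edges}
  ends_mem e he z hz := by
    rcases he with he | he
    · exact Or.inl (H.ends_mem e he z hz)
    · obtain ⟨w, -, hw⟩ := exists_ends_eq_of_mem hz
      have he' : G.ends e ∈ P.edges := he
      rw [hw] at he'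
      exact Or.inr (P.fst_mem_support_of_mem_edges he')

variable {H : G.Subgraph} {a b : G.V} {P : G.adjGraph.Walk a b}

lemma le_addWalk : H.Le (H.addWalk P) :=
  ⟨Set.subset_union_left, Set.subset_union_left⟩

lemma exists_walk_addWalk {x y : G.V} (q : G.adjGraph.Walk x y) (hq : q.edges ⊆ P.edges) :
    ∃ q' : (H.addWalk P).adjGraph.Walk x y, q'.support = q.support := by
  refine ⟨q.transfer _ fun e he => ?_, q.support_transfer _⟩
  induction e using Sym2.ind with
  | _ x y =>
    obtain ⟨f, hf⟩ := q.adj_of_mem_edges he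
    exact ⟨f, Or.inr (show G.ends f ∈ P.edges from hf ▸ hq he), hf⟩

lemma connected_addWalk (hH : H.toSG.Connected) (ha : a ∈ H.verts) :
    (H.addWalk P).toSG.Connected := by
  refine toSG_connected_of_reachable (Or.inl ha) fun x hx => ?_
  rcases hx with hx | hx
  · exact (reachable_of_toSG_connected hH ha hx).mono (adjGraph_mono Set.subset_union_left)
  · obtain ⟨q, -⟩ := exists_walk_addWalk (H := H) (P.takeUntil x hx)
      (P.edges_takeUntil_subset_edges hx)
    exact ⟨q⟩

/-- Adding a path between two distinct vertices creates no cut vertex: a vertex of the path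
avoids the deleted vertex along one of its two arcs back into `H`. -/
lemma not_isCutVertex_addWalk (hH : H.toSG.Connected) (hnc : ∀ v, ¬ H.IsCutVertex v)
    (hP : P.IsPath) (ha : a ∈ H.verts) (hb : b ∈ H.verts) (hab : a ≠ b) (z : G.V) :
    ¬ (H.addWalk P).IsCutVertex z := by
  rintro ⟨-, -, hdisc⟩
  have hdel : (H.delete z).edges ⊆ ((H.addWalk P).delete z).edges :=
    fun e he => ⟨Or.inl he.1, he.2⟩
  have harc : ∀ {x y : G.V} (q : G.adjGraph.Walk x y), q.edges ⊆ P.edges → z ∉ q.support →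
      ((H.addWalk P).delete z).adjGraph.Reachable x y := fun q hq hz => by
    obtain ⟨q', hq'⟩ := exists_walk_addWalk (H := H) q hq
    exact reachable_delete_of_notMem_support q' (hq' ▸ hz)
  have hroot : ∀ x ∈ ((H.addWalk P).delete z).verts, ∃ y ∈ H.verts, y ≠ z ∧
      ((H.addWalk P).delete z).adjGraph.Reachable x y := by
    rintro x ⟨hx | hx, hxz⟩
    · exact ⟨x, hx, hxz, SimpleGraph.Reachable.refl _⟩
    rcases hP.notMem_takeUntil_or_dropUntil hx (Ne.symm hxz) with h | h
    · exact ⟨a, ha, fun haz => h (haz ▸ SimpleGraph.Walk.start_mem_support _),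
        (harc _ (P.edges_takeUntil_subset_edges hx) h).symm⟩
    · exact ⟨b, hb, fun hbz => h (hbz ▸ SimpleGraph.Walk.end_mem_support _),
        harc _ (P.edges_dropUntil_subset_edges hx) h⟩
  obtain ⟨c, hc, hcz⟩ : ∃ c ∈ H.verts, c ≠ z := by
    by_cases haz : a = z
    · exact ⟨b, hb, haz ▸ hab.symm⟩
    · exact ⟨a, ha, haz⟩
  refine hdisc (toSG_connected_of_reachable ⟨Or.inl hc, hcz⟩ fun x hx => ?_)
  obtain ⟨y, hy, hyz, hxy⟩ := hroot x hx
  exact ((reachable_delete hH hnc hc hcz hy hyz).mono (adjGraph_mono hdel)).trans hxy.symm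

end Subgraph

/-- A block has no ears. -/
theorem Subgraph.IsBlock.eq_of_walk {B : G.Subgraph} (hB : B.IsBlock) {u u' : G.V}
    (hu : u ∈ B.verts) (hu' : u' ∈ B.verts) (r : G.adjGraph.Walk u u')
    (hr : ∀ x ∈ r.support, x ∈ B.verts → x = u ∨ x = u') (hedge : s(u, u') ∉ r.edges) :
    u = u' := by
  by_contra hne
  obtain ⟨z, hzP, hzu, hzu'⟩ := r.bypass_isPath.exists_mem_support_ne hne
    fun h => hedge (r.edges_bypass_subset_edges h)
  have hle := hB.2.2 _ Subgraph.le_addWalk (Subgraph.connected_addWalk hB.1 hu)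
    (Subgraph.not_isCutVertex_addWalk hB.1 hB.2.1 r.bypass_isPath hu hu' hne)
  rcases hr z (r.support_bypass_subset_support hzP) (hle.1 (Or.inr hzP)) with h | h
  exacts [hzu h, hzu' h]

theorem Subgraph.IsBlock.mem_edges {B : G.Subgraph} (hB : B.IsBlock) {e : G.E}
    (he : ∀ z ∈ G.ends e, z ∈ B.verts) : e ∈ B.edges := by
  let B' : G.Subgraph := ⟨B.verts, insert e B.edges, fun f hf z hz =>
    (Set.mem_insert_iff.mp hf).elim (fun h => he z (h ▸ hz)) (B.ends_mem f · z hz)⟩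
  have hconn : B'.toSG.Connected :=
    Subgraph.toSG_connected_of_edges_subset (H := B) rfl (Set.subset_insert _ _) hB.1
  have hnc : ∀ v, ¬ B'.IsCutVertex v := by
    rintro z ⟨hz, hne, hdisc⟩
    exact hdisc (Subgraph.toSG_connected_of_edges_subset (H := B.delete z) rfl
      (fun f hf => ⟨Set.subset_insert _ _ hf.1, hf.2⟩)
      (Subgraph.toSG_connected_delete (hB.2.1 z) hz hne))
  exact (hB.2.2 B' ⟨subset_rfl, Set.subset_insert _ _⟩ hconn hnc).2 (Set.mem_insert _ _)

namespace Subgraph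

def branch (B : G.Subgraph) (u : G.V) : Set G.V :=
  {w | ∃ p : G.adjGraph.Walk u w, ∀ x ∈ p.support, x ∈ B.verts → x = u}

variable {B : G.Subgraph} {u w : G.V}

lemma mem_branch_self : u ∈ B.branch u :=
  ⟨.nil, by simp⟩

lemma eq_of_mem_branch (hw : w ∈ B.branch u) (hwB : w ∈ B.verts) : w = u :=
  let ⟨p, hp⟩ := hw
  hp w p.end_mem_support hwB

lemma mem_branch_of_adj (hw : w ∈ B.branch u) {x : G.V} (hadj : G.adjGraph.Adj w x)
    (hx : x ∉ B.verts) : x ∈ B.branch u := by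
  obtain ⟨p, hp⟩ := hw
  refine ⟨p.concat hadj, fun z hz hzB => ?_⟩
  rw [SimpleGraph.Walk.support_concat, List.mem_append, List.mem_singleton] at hz
  exact hz.elim (hp z · hzB) fun h => absurd (h ▸ hzB) hx

lemma toSG_connected_induced_branch : (G.induced (B.branch u)).toSG.Connected := by
  refine toSG_connected_of_reachable mem_branch_self fun w ⟨p, hp⟩ => ?_
  have hsupp : ∀ x ∈ p.support, x ∈ B.branch u := fun x hx =>
    ⟨p.takeUntil x hx, fun z hz => hp z (p.support_takeUntil_subset_support hx hz)⟩
  refine ⟨p.transfer _ fun e he => ?_⟩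
  induction e using Sym2.ind with
  | _ x y =>
    obtain ⟨f, hf⟩ := p.adj_of_mem_edges he
    refine ⟨f, fun z hz => ?_, hf⟩
    rcases eq_or_eq_of_mem_ends hf hz with rfl | rfl
    exacts [hsupp z (p.fst_mem_support_of_mem_edges he),
      hsupp z (p.snd_mem_support_of_mem_edges he)]

lemma exists_mem_branch (hG : G.Connected) (hB : B.verts.Nonempty) (z : G.V) :
    ∃ u ∈ B.verts, z ∈ B.branch u := by
  obtain ⟨b, hb⟩ := hB
  obtain ⟨p⟩ := hG.preconnected z b
  obtain ⟨u, hu, q, hq⟩ := p.exists_walk_to_first_mem hb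
  exact ⟨u, hu, q.reverse, fun x hx => hq x (by simpa using hx)⟩

namespace IsBlock

lemma eq_of_mem_branch (hB : B.IsBlock) {u' : G.V} (hu : u ∈ B.verts) (hu' : u' ∈ B.verts)
    (h : w ∈ B.branch u) (h' : w ∈ B.branch u') : u = u' := by
  obtain ⟨p, hp⟩ := h
  obtain ⟨q, hq⟩ := h'
  by_contra hne
  refine hne (hB.eq_of_walk hu hu' (p.append q.reverse) (fun x hx hxB => ?_) fun h => ?_)
  · rw [SimpleGraph.Walk.mem_support_append_iff, SimpleGraph.Walk.support_reverse,
      List.mem_reverse] at hx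
    exact hx.imp (hp x · hxB) (hq x · hxB)
  · rw [SimpleGraph.Walk.edges_append, SimpleGraph.Walk.edges_reverse, List.mem_append,
      List.mem_reverse] at h
    rcases h with h | h
    · exact hne (hp u' (p.snd_mem_support_of_mem_edges h) hu').symm
    · exact hne (hq u (q.fst_mem_support_of_mem_edges h) hu)

lemma mem_edges_iff (hB : B.IsBlock) {e : G.E} (hu : u ∈ B.verts) (he : u ∈ G.ends e) :
    e ∈ B.edges ↔ e ∉ (G.induced (B.branch u)).edges := by
  obtain ⟨w, hwu, hw⟩ := exists_ends_eq_of_mem he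
  by_cases hwB : w ∈ B.verts
  · refine iff_of_true (hB.mem_edges fun z hz => ?_) fun hind => ?_
    · rcases eq_or_eq_of_mem_ends hw hz with rfl | rfl <;> assumption
    · exact hwu (Subgraph.eq_of_mem_branch (hind w (mem_ends_right hw)) hwB)
  · refine iff_of_false (fun heB => hwB (B.ends_mem e heB w (mem_ends_right hw)))
      (not_not.mpr fun z hz => ?_)
    rcases eq_or_eq_of_mem_ends hw hz with rfl | rfl
    exacts [mem_branch_self, mem_branch_of_adj mem_branch_self ⟨e, hw⟩ hwB]

lemma degree_eq_add (hB : B.IsBlock) (hu : u ∈ B.verts) :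
    G.degree u = B.degree u + (G.induced (B.branch u)).degree u := by
  rw [SignedGraph.degree, ← Finset.card_filter_add_card_filter_not (fun e => e ∈ B.edges),
    Subgraph.degree, Subgraph.degree, Finset.filter_filter]
  congr 2 <;> ext e
  · simp only [Finset.mem_filter, Finset.mem_univ, true_and]
    tauto
  · simp only [Finset.mem_filter, Finset.mem_univ, true_and]
    exact ⟨fun h => ⟨(hB.mem_edges_iff hu h.1).not_left.mp h.2, h.1⟩,
      fun h => ⟨h.2, (hB.mem_edges_iff hu h.2).not_left.mpr h.1⟩⟩

lemma exists_mem_induced_branch (hB : B.IsBlock) (hG : G.Connected) {e : G.E}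
    (he : e ∉ B.edges) :
    ∃ u ∈ B.verts, e ∈ (G.induced (B.branch u)).edges := by
  obtain ⟨x, y, hxy⟩ := exists_ends_eq e
  by_cases hx : x ∈ B.verts
  · exact ⟨x, hx, not_not.mp ((hB.mem_edges_iff hx (mem_ends_left hxy)).not.mp he)⟩
  by_cases hy : y ∈ B.verts
  · exact ⟨y, hy, not_not.mp ((hB.mem_edges_iff hy (mem_ends_right hxy)).not.mp he)⟩
  obtain ⟨u, hu, hxu⟩ := exists_mem_branch hG ((toSG_connected_iff B).mp hB.1).1 x
  refine ⟨u, hu, fun z hz => ?_⟩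
  rcases eq_or_eq_of_mem_ends hxy hz with rfl | rfl
  exacts [hxu, mem_branch_of_adj hxu ⟨e, hxy⟩ hy]

end IsBlock

def coBranch (B : G.Subgraph) (v : G.V) : Set G.V :=
  {x | x ∈ B.branch v → x = v}

variable {B : G.Subgraph} {u v : G.V}

lemma verts_subset_coBranch : B.verts ⊆ B.coBranch v :=
  fun _ hx hxv => eq_of_mem_branch hxv hx

namespace IsBlock

lemma branch_subset_coBranch (hB : B.IsBlock) (hu : u ∈ B.verts) (hv : v ∈ B.verts)
    (huv : u ≠ v) : B.branch u ⊆ B.coBranch v :=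
  fun _ hxu hxv => absurd (hB.eq_of_mem_branch hu hv hxu hxv) huv

lemma induced_branch_or_coBranch (hB : B.IsBlock) (hG : G.Connected) (hv : v ∈ B.verts)
    (e : G.E) :
    e ∈ (G.induced (B.branch v)).edges ∨ e ∈ (G.induced (B.coBranch v)).edges := by
  by_cases heB : e ∈ B.edges
  · exact Or.inr fun z hz => verts_subset_coBranch (B.ends_mem e heB z hz)
  obtain ⟨u, hu, he⟩ := hB.exists_mem_induced_branch hG heB
  by_cases huv : u = v
  · exact Or.inl (huv ▸ he)
  · exact Or.inr ((induced_le_induced (hB.branch_subset_coBranch hu hv huv)).2 he)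

lemma toSG_connected_induced_coBranch (hB : B.IsBlock) (hG : G.Connected)
    (hv : v ∈ B.verts) : (G.induced (B.coBranch v)).toSG.Connected := by
  refine toSG_connected_of_reachable (c := v) (fun _ => rfl) fun x hx => ?_
  obtain ⟨u, hu, hxu⟩ := exists_mem_branch hG ⟨v, hv⟩ x
  have hvu : (G.induced (B.coBranch v)).adjGraph.Reachable v u :=
    (reachable_of_toSG_connected hB.1 hv hu).mono
      (adjGraph_mono fun e he z hz => verts_subset_coBranch (B.ends_mem e he z hz))
  by_cases huv : u = v
  · subst huv
    rw [hx hxu]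
  · refine hvu.trans ((reachable_of_toSG_connected toSG_connected_induced_branch
      mem_branch_self hxu).mono (adjGraph_mono ?_))
    exact (induced_le_induced (hB.branch_subset_coBranch hu hv huv)).2

end IsBlock

end Subgraph

lemma degree_induced_add_le {A R : Set G.V} {v : G.V} (hAR : ∀ x ∈ A, x ∈ R → x = v) :
    (G.induced A).degree v + (G.induced R).degree v ≤ G.degree v := by
  unfold Subgraph.degree SignedGraph.degree
  rw [← Finset.card_union_of_disjoint]
  · refine Finset.card_le_card fun e he => ?_
    simp only [Finset.mem_union, Finset.mem_filter, Finset.mem_univ, true_and] at he ⊢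
    tauto
  · rw [Finset.disjoint_filter]
    rintro e - ⟨hA, -⟩ ⟨hR, -⟩
    obtain ⟨x, y, hxy⟩ := exists_ends_eq e
    have hx := hAR x (hA x (mem_ends_left hxy)) (hR x (mem_ends_left hxy))
    have hy := hAR y (hA y (mem_ends_right hxy)) (hR y (mem_ends_right hxy))
    exact ne_of_ends_eq hxy (hx.trans hy.symm)

/-- Colors extending to both sides would glue to an `L`-coloring of `G`. -/
lemma disjoint_extendableColors {L : G.V → Finset ℤ} (hnc : ¬ G.ListColorable L)
    {A R : Set G.V} {v : G.V} (hvA : v ∈ A) (hvR : v ∈ R) (hcover : ∀ x, x ∈ A ∨ x ∈ R)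
    (hAR : ∀ x ∈ A, x ∈ R → x = v)
    (hedges : ∀ e, e ∈ (G.induced A).edges ∨ e ∈ (G.induced R).edges) :
    Disjoint ((G.induced A).extendableColors L v) ((G.induced R).extendableColors L v) := by
  rw [Finset.disjoint_left]
  intro c hcA hcR
  obtain ⟨hc, φA, hφA, hφAL⟩ := Finset.mem_filter.mp hcA
  obtain ⟨-, φR, hφR, hφRL⟩ := Finset.mem_filter.mp hcR
  have hφAv : φA v = c := by simpa using hφAL v hvA
  have hφRv : φR v = c := by simpa using hφRL v hvR
  refine hnc (listColorable_of_cover (fun b => bif b then G.induced A else G.induced R)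
    (fun b => bif b then φA else φR) (fun x => decide (x ∈ A)) ?_ ?_ ?_ ?_)
  · rintro (_ | _)
    exacts [hφR, hφA]
  · rintro (_ | _) x hx
    · by_cases hxA : x ∈ A
      · obtain rfl := hAR x hxA hx
        simp [hxA, hφAv, hφRv]
      · simp [hxA]
    · simp [show x ∈ A from hx]
  · intro e
    rcases hedges e with h | h
    exacts [⟨true, h⟩, ⟨false, h⟩]
  · intro x
    by_cases hxA : x ∈ A
    · simpa [hxA] using mem_of_mem_update hc (hφAL x hxA)
    · simpa [hxA] using mem_of_mem_update hc (hφRL x ((hcover x).resolve_left hxA))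

/-- The two sets are disjoint, and by the degree bound at `v` each misses at most the degree of
`v` on its side. -/
theorem extendableColors_union_eq {L : G.V → Finset ℤ} (hdeg : ∀ x, G.degree x ≤ (L x).card)
    (hnc : ¬ G.ListColorable L) {A R : Set G.V} {v : G.V}
    (hA : (G.induced A).toSG.Connected) (hR : (G.induced R).toSG.Connected)
    (hvA : v ∈ A) (hvR : v ∈ R) (hcover : ∀ x, x ∈ A ∨ x ∈ R) (hAR : ∀ x ∈ A, x ∈ R → x = v)
    (hedges : ∀ e, e ∈ (G.induced A).edges ∨ e ∈ (G.induced R).edges) :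
    (G.induced A).extendableColors L v ∪ (G.induced R).extendableColors L v = L v := by
  have hdisj := disjoint_extendableColors hnc hvA hvR hcover hAR hedges
  have hcardA := Subgraph.card_le_card_extendableColors_add hA hvA (L := L)
    fun w _ _ => ((G.induced A).degree_le w).trans (hdeg w)
  have hcardR := Subgraph.card_le_card_extendableColors_add hR hvR (L := L)
    fun w _ _ => ((G.induced R).degree_le w).trans (hdeg w)
  have := degree_induced_add_le hAR
  have := hdeg v
  refine Finset.eq_of_subset_of_card_le (Finset.union_subset
    (Subgraph.extendableColors_subset _ _ _) (Subgraph.extendableColors_subset _ _ _)) ?_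
  rw [Finset.card_union_of_disjoint hdisj]
  omega

variable {L : G.V → Finset ℤ}

lemma listColorable_induced_singleton (L : G.V → Finset ℤ) (v : G.V) (c : ℤ) :
    (G.induced {v}).ListColorable (Function.update L v {c}) := by
  refine ⟨fun _ => c, fun e he x y hxy => absurd ?_ (ne_of_ends_eq hxy), fun x hx => ?_⟩
  · exact (he x (mem_ends_left hxy)).trans (he y (mem_ends_right hxy)).symm
  · rw [Set.mem_singleton_iff.mp hx]
    simp

lemma eq_of_reachable_induced_compl {v x : G.V}
    (h : (G.induced {v}ᶜ).adjGraph.Reachable x v) : x = v := by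
  obtain ⟨p⟩ := h.symm
  cases p with
  | nil => rfl
  | cons h _ => exact ((Subgraph.mem_verts_of_adj h).1 rfl).elim

noncomputable def blockList (L : G.V → Finset ℤ) (B : G.Subgraph) (v : G.V) : Finset ℤ :=
  (G.induced (B.branch v)).extendableColors L v

variable {B : G.Subgraph}

lemma degree_le_card_blockList (hdeg : ∀ x, G.degree x ≤ (L x).card) (hB : B.IsBlock)
    {v : G.V} (hv : v ∈ B.verts) : B.degree v ≤ (blockList L B v).card := by
  have := Subgraph.card_le_card_extendableColors_add Subgraph.toSG_connected_induced_branch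
    Subgraph.mem_branch_self (L := L) (H := G.induced (B.branch v))
    fun w _ _ => ((G.induced (B.branch v)).degree_le w).trans (hdeg w)
  have := hB.degree_eq_add hv
  have := hdeg v
  unfold blockList
  omega

/-- An `L_B`-coloring of `B` extends into every branch, and the branches meet `B` and each
other only at their roots. -/
theorem not_listColorable_blockList (hG : G.Connected) (hnc : ¬ G.ListColorable L)
    (hB : B.IsBlock) : ¬ B.ListColorable (blockList L B) := by
  rintro ⟨φ, hφ, hφL⟩
  have hext : ∀ u : B.verts, (G.induced (B.branch u)).ListColorable
      (Function.update L u {φ u}) := fun u => (Finset.mem_filter.mp (hφL u u.2)).2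
  choose ψ hψ hψL using hext
  have hψu : ∀ u : B.verts, ψ u u = φ u := fun u => by
    simpa using hψL u u Subgraph.mem_branch_self
  have hBne : B.verts.Nonempty := ((Subgraph.toSG_connected_iff B).mp hB.1).1
  choose root hroot hxroot using Subgraph.exists_mem_branch hG hBne
  have hroot_eq : ∀ (u : B.verts) x, x ∈ B.branch u → root x = u := fun u x hx =>
    hB.eq_of_mem_branch (hroot x) u.2 (hxroot x) hx
  refine hnc (listColorable_of_cover (ι := Option B.verts)
    (fun i => i.elim B fun u => G.induced (B.branch u)) (fun i => i.elim φ ψ)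
    (fun x => if x ∈ B.verts then none else some ⟨root x, hroot x⟩) ?_ ?_ ?_ ?_)
  · rintro (_ | u)
    exacts [hφ, hψ u]
  · rintro (_ | u) x hx
    · simp [show x ∈ B.verts from hx]
    · by_cases hxB : x ∈ B.verts
      · obtain rfl := Subgraph.eq_of_mem_branch hx hxB
        simp [hxB, hψu]
      · have hu : (⟨root x, hroot x⟩ : B.verts) = u := Subtype.ext (hroot_eq u x hx)
        simp [hxB, hu]
  · intro e
    by_cases heB : e ∈ B.edges
    · exact ⟨none, heB⟩
    · obtain ⟨u, hu, he⟩ := hB.exists_mem_induced_branch hG heB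
      exact ⟨some ⟨u, hu⟩, he⟩
  · intro x
    by_cases hxB : x ∈ B.verts
    · simpa [hxB] using Subgraph.extendableColors_subset _ _ _ (hφL x hxB)
    · have hx : x ≠ root x := fun h => hxB (h ▸ hroot x)
      simpa [hxB, hx] using hψL ⟨root x, hroot x⟩ x (hxroot x)

/-- If `c` extended to every component of `G - v` with `v` put back, these extensions would
glue to an `L`-coloring of `G`. -/
lemma exists_not_listColorable_component (hnc : ¬ G.ListColorable L) {v : G.V} {c : ℤ}
    (hc : c ∈ L v) : ∃ w, ¬ (G.induced (insert v
      ((G.induced {v}ᶜ).adjGraph.connectedComponentMk w).supp)).ListColorable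
      (Function.update L v {c}) := by
  by_contra! h
  set Gv := (G.induced {v}ᶜ).adjGraph
  have hK : ∀ K : Gv.ConnectedComponent,
      (G.induced (insert v K.supp)).ListColorable (Function.update L v {c}) := fun K => K.ind h
  choose ψ hψ hψL using hK
  have hψv : ∀ K, ψ K v = c := fun K => by simpa using hψL K v (Set.mem_insert v _)
  refine hnc (listColorable_of_cover (fun K => G.induced (insert v K.supp)) ψ
    Gv.connectedComponentMk hψ ?_ ?_ ?_)
  · rintro K x (rfl | hx)
    · rw [hψv, hψv]
    · rw [(K.mem_supp_iff x).mp hx]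
  · intro e
    obtain ⟨x, y, hxy⟩ := exists_ends_eq e
    by_cases hve : v ∈ G.ends e
    · rcases eq_or_eq_of_mem_ends hxy hve with rfl | rfl
      · refine ⟨Gv.connectedComponentMk y, fun z hz => ?_⟩
        rcases eq_or_eq_of_mem_ends hxy hz with rfl | rfl
        exacts [Set.mem_insert _ _, Or.inr rfl]
      · refine ⟨Gv.connectedComponentMk x, fun z hz => ?_⟩
        rcases eq_or_eq_of_mem_ends hxy hz with rfl | rfl
        exacts [Or.inr rfl, Set.mem_insert _ _]
    · have hadj : Gv.Adj x y := ⟨e, fun z hz hzv => hve (hzv ▸ hz), hxy⟩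
      refine ⟨Gv.connectedComponentMk x, fun z hz => Or.inr ?_⟩
      rcases eq_or_eq_of_mem_ends hxy hz with rfl | rfl
      exacts [rfl, (SimpleGraph.ConnectedComponent.connectedComponentMk_eq_of_adj hadj).symm]
  · intro x
    exact mem_of_mem_update hc (hψL _ x (Or.inr rfl))

lemma exists_edge_to_reachable_induced_compl (hG : G.Connected) {v w : G.V} (hwv : w ≠ v) :
    ∃ e y, G.ends e = s(y, v) ∧ (G.induced {v}ᶜ).adjGraph.Reachable w y := by
  set Gv := (G.induced {v}ᶜ).adjGraph
  obtain ⟨p⟩ := hG.preconnected w v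
  obtain ⟨d, -, hwy, hd⟩ := p.exists_boundary_dart {x | Gv.Reachable w x}
    (SimpleGraph.Reachable.refl w) fun h => hwv (eq_of_reachable_induced_compl h)
  obtain ⟨e, he⟩ := d.adj
  have hyv : d.toProd.1 ≠ v := by
    rintro h
    exact hwv (eq_of_reachable_induced_compl (h ▸ hwy : Gv.Reachable w v))
  have hdv : d.toProd.2 = v := by
    by_contra hne
    refine hd (hwy.trans (SimpleGraph.Adj.reachable ⟨e, fun z hz => ?_, he⟩))
    rcases eq_or_eq_of_mem_ends he hz with rfl | rfl
    exacts [hyv, hne]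
  exact ⟨e, d.toProd.1, hdv ▸ he, hwy⟩

/-- Any block through an edge from `v` into the component of `w` in `G - v` will do: otherwise
it would have an ear. -/
lemma exists_isBlock_branch_disjoint (hG : G.Connected) {v w : G.V} (hwv : w ≠ v) :
    ∃ B : G.Subgraph, B.IsBlock ∧ v ∈ B.verts ∧
      ∀ z, (G.induced {v}ᶜ).adjGraph.Reachable w z → z ∉ B.branch v := by
  obtain ⟨e, y₀, he, hwy₀⟩ := exists_edge_to_reachable_induced_compl hG hwv
  obtain ⟨B, hB, heB⟩ := exists_isBlock_mem_edges e
  have hvB := B.ends_mem e heB v (mem_ends_right he)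
  refine ⟨B, hB, hvB, fun z hwz ⟨pA, hpA⟩ => ?_⟩
  have hzv : z ≠ v := by
    rintro rfl
    exact hwv (eq_of_reachable_induced_compl hwz)
  obtain ⟨q₀⟩ := hwz.symm.trans hwy₀
  obtain ⟨y, hyB, q, hq⟩ := q₀.exists_walk_to_first_mem (B.ends_mem e heB y₀ (mem_ends_left he))
  have hqv : ∀ t ∈ q.support, t ≠ v := Subgraph.support_subset_verts q hzv
  let q' := q.mapLe (Subgraph.adjGraph_le _)
  have hq' : q'.support = q.support := SimpleGraph.Walk.support_mapLe_eq_support _ _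
  refine hqv y q.end_mem_support (hB.eq_of_walk hvB hyB (pA.append q') (fun x hx hxB => ?_)
    fun h => ?_).symm
  · rw [SimpleGraph.Walk.mem_support_append_iff, hq'] at hx
    exact hx.imp (hpA x · hxB) (hq x · hxB)
  · rw [SimpleGraph.Walk.edges_append, List.mem_append] at h
    rcases h with h | h
    · exact hqv y q.end_mem_support (hpA y (pA.snd_mem_support_of_mem_edges h) hyB)
    · exact hqv v (hq' ▸ q'.fst_mem_support_of_mem_edges h) rfl

theorem exists_isBlock_mem_blockList (hG : G.Connected) (hdeg : ∀ x, G.degree x ≤ (L x).card)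
    (hnc : ¬ G.ListColorable L) {v : G.V} {c : ℤ} (hc : c ∈ L v) :
    ∃ B : G.Subgraph, B.IsBlock ∧ v ∈ B.verts ∧ c ∈ blockList L B v := by
  obtain ⟨w, hw⟩ := exists_not_listColorable_component hnc hc
  have hwv : w ≠ v := by
    rintro rfl
    refine hw ((listColorable_induced_singleton L w c).mono (induced_le_induced ?_))
    rintro x (rfl | hx)
    exacts [rfl, eq_of_reachable_induced_compl (SimpleGraph.ConnectedComponent.eq.mp hx)]
  obtain ⟨B, hB, hvB, hdisj⟩ := exists_isBlock_branch_disjoint hG hwv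
  have hsub : insert v ((G.induced {v}ᶜ).adjGraph.connectedComponentMk w).supp ⊆
      B.coBranch v := by
    rintro x (rfl | hx) hxA
    · rfl
    · exact absurd hxA (hdisj x (SimpleGraph.ConnectedComponent.eq.mp hx).symm)
  have hcR : c ∉ (G.induced (B.coBranch v)).extendableColors L v := fun h =>
    hw ((Finset.mem_filter.mp h).2.mono (induced_le_induced hsub))
  have hunion := extendableColors_union_eq hdeg hnc Subgraph.toSG_connected_induced_branch
    (hB.toSG_connected_induced_coBranch hG hvB) Subgraph.mem_branch_self (fun _ => rfl)
    (fun x => (em (x ∈ B.branch v)).imp_right fun hx hx' => absurd hx' hx)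
    (fun _ hxA hxR => hxR hxA) (hB.induced_branch_or_coBranch hG hvB)
  rw [← hunion, Finset.mem_union] at hc
  exact ⟨B, hB, hvB, hc.resolve_right hcR⟩

end SignedGraph

/-- The lists of an uncolorable pair decompose over the blocks. -/
theorem uncolorablePair_block_decomposition (G : SignedGraph) (L : G.V → Finset ℤ)
    (h : G.UncolorablePair L) :
    ∃ LB : G.Subgraph → G.V → Finset ℤ,
      (∀ B : G.Subgraph, B.IsBlock → B.toSG.UncolorablePair (fun u => LB B u.1)) ∧
      ∀ v : G.V, (L v : Set ℤ) =
        ⋃ B ∈ {B : G.Subgraph | B.IsBlock ∧ v ∈ B.verts}, (LB B v : Set ℤ) := by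
  obtain ⟨hG, hdeg, hnc⟩ := h
  refine ⟨SignedGraph.blockList L, fun B hB => ⟨hB.1, fun u => ?_, fun hcol => ?_⟩, fun v => ?_⟩
  · rw [SignedGraph.Subgraph.toSG_degree]
    exact SignedGraph.degree_le_card_blockList hdeg hB u.2
  · exact SignedGraph.not_listColorable_blockList hG hnc hB
      (SignedGraph.Subgraph.listColorable_of_toSG hcol)
  · ext c
    simp only [Set.mem_iUnion, Set.mem_ofPred_eq, Finset.mem_coe, exists_prop]
    constructor
    · intro hc
      obtain ⟨B, hB, hvB, hcB⟩ := SignedGraph.exists_isBlock_mem_blockList hG hdeg hnc hc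
      exact ⟨B, ⟨hB, hvB⟩, hcB⟩
    · rintro ⟨B, -, hcB⟩
      exact SignedGraph.Subgraph.extendableColors_subset _ _ _ hcB
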